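/- Meixner polynomials satisfy the convolution identity M_{n;b,c}(y+z) = ∑_{s=0}^n C(n,s) M_{s;u,c}(y) M_{n−s;v,c}(z) whenever u + v = b, where C(n,s) = n!/(s!(n−s)!). -/
import Mathlib


open Polynomial Finset

section MeixnerAux

/-- Splitting a binomial-weighted sum via Pascal's rule. -/
private lemma meixner_binom_split (t : ℕ → ℝ) (n : ℕ) :
    ∑ k ∈ Finset.range (n + 2), ((n + 1).choose k : ℝ) * t k
      = ∑ k ∈ Finset.range (n + 1), (n.choose k : ℝ) * (t k + t (k + 1)) := by
  rw [Finset.sum_range_succ' (fun k => ((n + 1).choose k : ℝ) * t k)]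
  have h2 : ∑ k ∈ Finset.range (n + 1), ((n.choose (k + 1) : ℝ)) * t (k + 1)
      + ((n.choose 0 : ℕ) : ℝ) * t 0 = ∑ k ∈ Finset.range (n + 1), (n.choose k : ℝ) * t k := by
    rw [← Finset.sum_range_succ' (fun k => ((n.choose k : ℝ)) * t k) (n + 1),
      Finset.sum_range_succ]
    simp
  calc ∑ x ∈ Finset.range (n + 1), (((n+1).choose (x+1) : ℕ) : ℝ) * t (x + 1)
        + (((n+1).choose 0 : ℕ) : ℝ) * t 0
      = ∑ x ∈ Finset.range (n + 1), ((n.choose x : ℝ) * t (x + 1)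
          + (n.choose (x+1) : ℝ) * t (x + 1))
        + ((n.choose 0 : ℕ) : ℝ) * t 0 := by
        simp only [Nat.choose_succ_succ, Nat.cast_add, add_mul, Nat.choose_zero_right]
    _ = ∑ x ∈ Finset.range (n + 1), (n.choose x : ℝ) * t (x + 1)
        + (∑ x ∈ Finset.range (n + 1), (n.choose (x+1) : ℝ) * t (x + 1)
          + ((n.choose 0 : ℕ) : ℝ) * t 0) := by
        rw [Finset.sum_add_distrib]; ring
    _ = ∑ x ∈ Finset.range (n + 1), (n.choose x : ℝ) * t (x + 1)
        + ∑ k ∈ Finset.range (n + 1), (n.choose k : ℝ) * t k := by rw [h2]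
    _ = ∑ k ∈ Finset.range (n + 1), (n.choose k : ℝ) * (t k + t (k + 1)) := by
        rw [← Finset.sum_add_distrib]; apply Finset.sum_congr rfl; intro k _; ring

private lemma asc_vandermonde (y z : ℝ) (n : ℕ) :
    (ascPochhammer ℝ n).eval (y + z)
      = ∑ k ∈ Finset.range (n + 1), (n.choose k : ℝ) *
          ((ascPochhammer ℝ k).eval y * (ascPochhammer ℝ (n - k)).eval z) := by
  induction n with
  | zero => simp
  | succ n ih =>
    rw [meixner_binom_split (fun k => (ascPochhammer ℝ k).eval y *
        (ascPochhammer ℝ (n + 1 - k)).eval z) n, ascPochhammer_succ_eval, ih,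
      Finset.sum_mul]
    apply Finset.sum_congr rfl
    intro k hk
    rw [Finset.mem_range] at hk
    have hk' : k ≤ n := Nat.lt_succ_iff.mp hk
    have e1 : n + 1 - k = (n - k) + 1 := by omega
    have e2 : n + 1 - (k + 1) = n - k := by omega
    rw [e1, e2, ascPochhammer_succ_eval, ascPochhammer_succ_eval]
    have e3 : ((n : ℝ) - (k : ℝ)) = ((n - k : ℕ) : ℝ) := by
      push_cast [Nat.cast_sub hk']; ring
    rw [← e3]
    ring

private lemma desc_vandermonde (y z : ℝ) (n : ℕ) :
    (descPochhammer ℝ n).eval (y + z)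
      = ∑ k ∈ Finset.range (n + 1), (n.choose k : ℝ) *
          ((descPochhammer ℝ k).eval y * (descPochhammer ℝ (n - k)).eval z) := by
  induction n with
  | zero => simp
  | succ n ih =>
    rw [meixner_binom_split (fun k => (descPochhammer ℝ k).eval y *
        (descPochhammer ℝ (n + 1 - k)).eval z) n, descPochhammer_succ_eval, ih,
      Finset.sum_mul]
    apply Finset.sum_congr rfl
    intro k hk
    rw [Finset.mem_range] at hk
    have hk' : k ≤ n := Nat.lt_succ_iff.mp hk
    have e1 : n + 1 - k = (n - k) + 1 := by omega
    have e2 : n + 1 - (k + 1) = n - k := by omega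
    rw [e1, e2, descPochhammer_succ_eval, descPochhammer_succ_eval]
    have e3 : ((n : ℝ) - (k : ℝ)) = ((n - k : ℕ) : ℝ) := by
      push_cast [Nat.cast_sub hk']; ring
    rw [← e3]
    ring

/-- The explicit candidate for the Meixner polynomials:
`S_n(x) = ∑_k C(n,k) A^k B^{n-k} (x)_k (x+b)^{(n-k)}`. -/
private noncomputable def Ssum (A B b : ℝ) (n : ℕ) (x : ℝ) : ℝ :=
  ∑ k ∈ Finset.range (n + 1), (n.choose k : ℝ) * A ^ k * B ^ (n - k) *
    (descPochhammer ℝ k).eval x * (ascPochhammer ℝ (n - k)).eval (x + b)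

private noncomputable def Wsum (A B b : ℝ) (n : ℕ) (x : ℝ) : ℝ :=
  ∑ k ∈ Finset.range (n + 1), (k : ℝ) * (n.choose k : ℝ) * A ^ k * B ^ (n - k) *
    (descPochhammer ℝ k).eval x * (ascPochhammer ℝ (n - k)).eval (x + b)

private lemma Ssum_step (A B b : ℝ) (n : ℕ) (x : ℝ) :
    Ssum A B b (n + 1) x
      = ((A + B) * x + B * b + B * n) * Ssum A B b n x - (A + B) * Wsum A B b n x := by
  unfold Ssum Wsum
  calc ∑ k ∈ Finset.range (n + 1 + 1), ((n+1).choose k : ℝ) * A ^ k * B ^ (n + 1 - k) *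
        (descPochhammer ℝ k).eval x * (ascPochhammer ℝ (n + 1 - k)).eval (x + b)
      = ∑ k ∈ Finset.range (n + 2), ((n + 1).choose k : ℝ) *
          (A ^ k * B ^ (n + 1 - k) * (descPochhammer ℝ k).eval x *
            (ascPochhammer ℝ (n + 1 - k)).eval (x + b)) := by
        apply Finset.sum_congr rfl; intros; ring
    _ = ∑ k ∈ Finset.range (n + 1), (n.choose k : ℝ) *
          ((A ^ k * B ^ (n + 1 - k) * (descPochhammer ℝ k).eval x *
            (ascPochhammer ℝ (n + 1 - k)).eval (x + b))
          + (A ^ (k+1) * B ^ (n + 1 - (k+1)) * (descPochhammer ℝ (k+1)).eval x *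
            (ascPochhammer ℝ (n + 1 - (k+1))).eval (x + b))) :=
        meixner_binom_split (fun k => A ^ k * B ^ (n + 1 - k) * (descPochhammer ℝ k).eval x *
          (ascPochhammer ℝ (n + 1 - k)).eval (x + b)) n
    _ = ∑ k ∈ Finset.range (n + 1),
          (((A + B) * x + B * b + B * n) * ((n.choose k : ℝ) * A ^ k * B ^ (n - k) *
            (descPochhammer ℝ k).eval x * (ascPochhammer ℝ (n - k)).eval (x + b))
          - (A + B) * ((k : ℝ) * (n.choose k : ℝ) * A ^ k * B ^ (n - k) *
            (descPochhammer ℝ k).eval x * (ascPochhammer ℝ (n - k)).eval (x + b))) := by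
        apply Finset.sum_congr rfl
        intro k hk
        rw [Finset.mem_range] at hk
        have hk' : k ≤ n := Nat.lt_succ_iff.mp hk
        have e1 : n + 1 - k = (n - k) + 1 := by omega
        have e2 : n + 1 - (k + 1) = n - k := by omega
        have e3 : ((n - k : ℕ) : ℝ) = (n : ℝ) - (k : ℝ) := by
          push_cast [Nat.cast_sub hk']; ring
        rw [e1, e2, ascPochhammer_succ_eval, descPochhammer_succ_eval, pow_succ, e3]
        ring
    _ = _ := by
        rw [Finset.sum_sub_distrib, ← Finset.mul_sum, ← Finset.mul_sum]

private lemma Wsum_step (A B b : ℝ) (n : ℕ) (x : ℝ) :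
    Wsum A B b (n + 1) x
      = ((n : ℝ) + 1) * A * (x * Ssum A B b n x - Wsum A B b n x) := by
  unfold Ssum Wsum
  rw [Finset.sum_range_succ' _ (n + 1)]
  simp only [Nat.cast_zero, zero_mul, add_zero]
  calc ∑ k ∈ Finset.range (n + 1), (((k+1 : ℕ)):ℝ) * (((n+1).choose (k+1) : ℕ) : ℝ) * A ^ (k+1) *
        B ^ (n + 1 - (k+1)) * (descPochhammer ℝ (k+1)).eval x *
        (ascPochhammer ℝ (n + 1 - (k+1))).eval (x + b)
      = ∑ k ∈ Finset.range (n + 1), ((n : ℝ) + 1) * A *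
          (x * ((n.choose k : ℝ) * A ^ k * B ^ (n - k) *
            (descPochhammer ℝ k).eval x * (ascPochhammer ℝ (n - k)).eval (x + b))
          - ((k : ℝ) * (n.choose k : ℝ) * A ^ k * B ^ (n - k) *
            (descPochhammer ℝ k).eval x * (ascPochhammer ℝ (n - k)).eval (x + b))) := by
        apply Finset.sum_congr rfl
        intro k hk
        have e2 : n + 1 - (k + 1) = n - k := by omega
        have hc : (((k+1 : ℕ)) : ℝ) * (((n+1).choose (k+1) : ℕ) : ℝ)
            = ((n : ℝ) + 1) * (n.choose k : ℝ) := by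
          have h := Nat.add_one_mul_choose_eq n k
          have h3 : (((n+1) * n.choose k : ℕ) : ℝ) = (((n+1).choose (k+1) * (k+1) : ℕ) : ℝ) := by
            exact_mod_cast congrArg Nat.cast h
          push_cast at h3 ⊢
          linarith [h3]
        rw [e2, descPochhammer_succ_eval, pow_succ, hc]
        ring
    _ = _ := by
        rw [← Finset.mul_sum, Finset.sum_sub_distrib, ← Finset.mul_sum]

private lemma Ssum_rec (A B b : ℝ) (n : ℕ) (x : ℝ) :
    Ssum A B b (n + 2) x
      = ((A + B) * x + B * b - (A - B) * ((n : ℝ) + 1)) * Ssum A B b (n + 1) x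
        + A * B * ((n : ℝ) + 1) * ((n : ℝ) + b) * Ssum A B b n x := by
  rw [show n + 2 = (n + 1) + 1 from rfl, Ssum_step A B b (n + 1) x,
    Wsum_step A B b n x, Ssum_step A B b n x]
  push_cast
  ring

private lemma choose_coeff {n k i j : ℕ} (hik : i ≤ k) (hk : k ≤ n) (hj : j ≤ n - k) :
    n.choose k * k.choose i * (n - k).choose j
      = n.choose (i + j) * (i + j).choose i * (n - (i + j)).choose (k - i) := by
  have hc : 0 < Nat.factorial i * Nat.factorial (k - i) *
      (Nat.factorial j * Nat.factorial (n - k - j)) := by positivity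
  apply Nat.eq_of_mul_eq_mul_right hc
  have e1 : k.choose i * Nat.factorial i * Nat.factorial (k - i) = Nat.factorial k :=
    Nat.choose_mul_factorial_mul_factorial hik
  have e2 : (n - k).choose j * Nat.factorial j * Nat.factorial (n - k - j)
      = Nat.factorial (n - k) := Nat.choose_mul_factorial_mul_factorial hj
  have e3 : n.choose k * Nat.factorial k * Nat.factorial (n - k) = Nat.factorial n :=
    Nat.choose_mul_factorial_mul_factorial hk
  have f0 : i + j ≤ n := by omega
  have f1 : (i + j).choose i * Nat.factorial i * Nat.factorial j = Nat.factorial (i + j) := by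
    have := Nat.choose_mul_factorial_mul_factorial (Nat.le_add_right i j)
    simpa using this
  have f2 : (n - (i + j)).choose (k - i) * Nat.factorial (k - i) * Nat.factorial (n - k - j)
      = Nat.factorial (n - (i + j)) := by
    have h1 : k - i ≤ n - (i + j) := by omega
    have := Nat.choose_mul_factorial_mul_factorial h1
    rwa [show n - (i + j) - (k - i) = n - k - j by omega] at this
  have f3 : n.choose (i + j) * Nat.factorial (i + j) * Nat.factorial (n - (i + j))
      = Nat.factorial n := Nat.choose_mul_factorial_mul_factorial f0
  calc n.choose k * k.choose i * (n - k).choose j *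
        (Nat.factorial i * Nat.factorial (k - i) * (Nat.factorial j * Nat.factorial (n - k - j)))
      = n.choose k * (k.choose i * Nat.factorial i * Nat.factorial (k - i)) *
        ((n - k).choose j * Nat.factorial j * Nat.factorial (n - k - j)) := by ring
    _ = n.choose k * Nat.factorial k * Nat.factorial (n - k) := by rw [e1, e2]
    _ = Nat.factorial n := e3
    _ = n.choose (i + j) * Nat.factorial (i + j) * Nat.factorial (n - (i + j)) := f3.symm
    _ = n.choose (i + j) * ((i + j).choose i * Nat.factorial i * Nat.factorial j)
        * ((n - (i + j)).choose (k - i) * Nat.factorial (k - i) * Nat.factorial (n - k - j)) := by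
        rw [f1, f2]
    _ = n.choose (i + j) * (i + j).choose i * (n - (i + j)).choose (k - i)
        * (Nat.factorial i * Nat.factorial (k - i)
          * (Nat.factorial j * Nat.factorial (n - k - j))) := by ring

set_option linter.unnecessarySeqFocus false in
private lemma quad (f g h e : ℕ → ℝ) (n : ℕ) :
    ∑ k ∈ Finset.range (n + 1), ∑ i ∈ Finset.range (k + 1), ∑ j ∈ Finset.range (n - k + 1),
      (n.choose k : ℝ) * (k.choose i : ℝ) * ((n - k).choose j : ℝ) *
        f i * g (k - i) * h j * e (n - k - j)
    = ∑ s ∈ Finset.range (n + 1), ∑ i ∈ Finset.range (s + 1), ∑ j ∈ Finset.range (n - s + 1),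
      (n.choose s : ℝ) * (s.choose i : ℝ) * ((n - s).choose j : ℝ) *
        f i * h (s - i) * g j * e (n - s - j) := by
  have lhs_eq : ∀ (F : ℕ → ℕ → ℕ → ℝ),
      (∑ k ∈ Finset.range (n + 1), ∑ i ∈ Finset.range (k + 1),
        ∑ j ∈ Finset.range (n - k + 1), F k i j)
      = ∑ x ∈ (Finset.range (n + 1)).sigma
          (fun k => Finset.range (k + 1) ×ˢ Finset.range (n - k + 1)),
          F x.1 x.2.1 x.2.2 := by
    intro F
    calc (∑ k ∈ Finset.range (n + 1), ∑ i ∈ Finset.range (k + 1),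
          ∑ j ∈ Finset.range (n - k + 1), F k i j)
        = ∑ k ∈ Finset.range (n + 1),
            ∑ p ∈ Finset.range (k + 1) ×ˢ Finset.range (n - k + 1), F k p.1 p.2 :=
          Finset.sum_congr rfl fun k _ => (Finset.sum_product' _ _ (fun i j => F k i j)).symm
      _ = _ := Finset.sum_sigma' (Finset.range (n + 1))
            (fun k => Finset.range (k + 1) ×ˢ Finset.range (n - k + 1))
            (fun k p => F k p.1 p.2)
  rw [lhs_eq, lhs_eq]
  apply Finset.sum_nbij' (i := fun x => ⟨x.2.1 + x.2.2, (x.2.1, x.1 - x.2.1)⟩)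
    (j := fun x => ⟨x.2.1 + x.2.2, (x.2.1, x.1 - x.2.1)⟩)
  · intro a ha
    simp only [Finset.mem_sigma, Finset.mem_product, Finset.mem_range] at ha ⊢
    omega
  · intro a ha
    simp only [Finset.mem_sigma, Finset.mem_product, Finset.mem_range] at ha ⊢
    omega
  · intro a ha
    simp only [Finset.mem_sigma, Finset.mem_product, Finset.mem_range] at ha
    obtain ⟨k, i, j⟩ := a
    simp only at ha ⊢
    ext <;> simp <;> omega
  · intro a ha
    simp only [Finset.mem_sigma, Finset.mem_product, Finset.mem_range] at ha
    obtain ⟨k, i, j⟩ := a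
    simp only at ha ⊢
    ext <;> simp <;> omega
  · intro a ha
    simp only [Finset.mem_sigma, Finset.mem_product, Finset.mem_range] at ha
    obtain ⟨k, i, j⟩ := a
    simp only at ha ⊢
    have hik : i ≤ k := by omega
    have hkn : k ≤ n := by omega
    have hj : j ≤ n - k := by omega
    have hcc := choose_coeff hik hkn hj
    have hcast : ((n.choose k * k.choose i * (n - k).choose j : ℕ) : ℝ)
        = ((n.choose (i + j) * (i + j).choose i * (n - (i + j)).choose (k - i) : ℕ) : ℝ) := by
      exact_mod_cast congrArg Nat.cast hcc
    push_cast at hcast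
    rw [show (i + j) - i = j by omega, show n - (i + j) - (k - i) = n - k - j by omega]
    linear_combination (f i * g (k - i) * h j * e (n - k - j)) * hcast

private lemma expand3 (c : ℝ) (s1 s2 : Finset ℕ) (T U : ℕ → ℝ) :
    c * (∑ i ∈ s1, T i) * (∑ j ∈ s2, U j) = ∑ i ∈ s1, ∑ j ∈ s2, c * T i * U j := by
  rw [mul_assoc, Finset.sum_mul_sum, Finset.mul_sum]
  apply Finset.sum_congr rfl; intros
  rw [Finset.mul_sum]
  apply Finset.sum_congr rfl; intros
  ring

private lemma Ssum_conv (A B u v : ℝ) (n : ℕ) (y z : ℝ) :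
    Ssum A B (u + v) n (y + z)
      = ∑ s ∈ Finset.range (n + 1),
          (n.choose s : ℝ) * Ssum A B u s y * Ssum A B v (n - s) z := by
  unfold Ssum
  calc ∑ k ∈ Finset.range (n + 1), (n.choose k : ℝ) * A ^ k * B ^ (n - k) *
        (descPochhammer ℝ k).eval (y + z) *
        (ascPochhammer ℝ (n - k)).eval (y + z + (u + v))
      = ∑ k ∈ Finset.range (n + 1), ∑ i ∈ Finset.range (k + 1),
          ∑ j ∈ Finset.range (n - k + 1),
          (n.choose k : ℝ) * (k.choose i : ℝ) * ((n - k).choose j : ℝ) *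
            (A ^ i * (descPochhammer ℝ i).eval y) *
            (A ^ (k - i) * (descPochhammer ℝ (k - i)).eval z) *
            (B ^ j * (ascPochhammer ℝ j).eval (y + u)) *
            (B ^ (n - k - j) * (ascPochhammer ℝ (n - k - j)).eval (z + v)) := by
        apply Finset.sum_congr rfl
        intro k hk
        rw [Finset.mem_range] at hk
        have hk' : k ≤ n := Nat.lt_succ_iff.mp hk
        rw [show y + z + (u + v) = (y + u) + (z + v) by ring,
          desc_vandermonde, asc_vandermonde,
          show (n.choose k : ℝ) * A ^ k * B ^ (n - k) = ((n.choose k : ℝ) * A ^ k * B ^ (n - k)) from rfl]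
        rw [expand3 ((n.choose k : ℝ) * A ^ k * B ^ (n - k)) _ _ _ _]
        apply Finset.sum_congr rfl
        intro i hi
        rw [Finset.mem_range] at hi
        have hi' : i ≤ k := Nat.lt_succ_iff.mp hi
        apply Finset.sum_congr rfl
        intro j hj
        rw [Finset.mem_range] at hj
        have hj' : j ≤ n - k := Nat.lt_succ_iff.mp hj
        rw [show A ^ k = A ^ i * A ^ (k - i) by rw [← pow_add]; congr 1; omega,
          show B ^ (n - k) = B ^ j * B ^ (n - k - j) by rw [← pow_add]; congr 1; omega]
        ring
    _ = ∑ s ∈ Finset.range (n + 1), ∑ i ∈ Finset.range (s + 1),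
          ∑ j ∈ Finset.range (n - s + 1),
          (n.choose s : ℝ) * (s.choose i : ℝ) * ((n - s).choose j : ℝ) *
            (A ^ i * (descPochhammer ℝ i).eval y) *
            (B ^ (s - i) * (ascPochhammer ℝ (s - i)).eval (y + u)) *
            (A ^ j * (descPochhammer ℝ j).eval z) *
            (B ^ (n - s - j) * (ascPochhammer ℝ (n - s - j)).eval (z + v)) :=
        quad (fun i => A ^ i * (descPochhammer ℝ i).eval y)
          (fun i => A ^ i * (descPochhammer ℝ i).eval z)
          (fun i => B ^ i * (ascPochhammer ℝ i).eval (y + u))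
          (fun i => B ^ i * (ascPochhammer ℝ i).eval (z + v)) n
    _ = _ := by
        apply Finset.sum_congr rfl
        intro s hs
        rw [expand3 ((n.choose s : ℝ)) _ _
          (fun i => (s.choose i : ℝ) * A ^ i * B ^ (s - i) * (descPochhammer ℝ i).eval y *
            (ascPochhammer ℝ (s - i)).eval (y + u))
          (fun j => ((n - s).choose j : ℝ) * A ^ j * B ^ (n - s - j) *
            (descPochhammer ℝ j).eval z * (ascPochhammer ℝ (n - s - j)).eval (z + v))]
        apply Finset.sum_congr rfl
        intro i _
        apply Finset.sum_congr rfl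
        intro j _
        ring

end MeixnerAux

/-- The Meixner polynomials `M_{n;b,c}` with parameters `b` and `c`, normalized
as in the paper's recurrence (so that `M_{n;1,p}` is the Meixner polynomial for
the geometric case): `M₀ = 1`, `M₁` determined by the recurrence at `n = 0`, and
`(c/(1−c)) M_{n+1}(x) = ((c−1)x + n + (n+b)c) M_n(x) − (1−c) n (n+b−1) M_{n−1}(x)`. -/
noncomputable def meixnerGen (b c : ℝ) : ℕ → Polynomial ℝ
  | 0 => 1
  | 1 => C ((1 - c) / c) * (C (c - 1) * X + C (b * c))
  | (n + 2) =>
      C ((1 - c) / c) *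
        ((C (c - 1) * X + C (((n : ℝ) + 1) + ((n : ℝ) + 1 + b) * c)) *
            meixnerGen b c (n + 1)
          - C ((1 - c) * ((n : ℝ) + 1) * ((n : ℝ) + b)) * meixnerGen b c n)

private lemma meixner_eval_eq (b c : ℝ) (hc : c ≠ 0) :
    ∀ (n : ℕ) (x : ℝ),
      (meixnerGen b c n).eval x = Ssum ((c - 1) / c) (1 - c) b n x
  | 0, x => by
      simp [meixnerGen, Ssum]
  | 1, x => by
      simp only [meixnerGen, Ssum, Finset.sum_range_succ, Finset.sum_range_zero,
        eval_mul, eval_add, eval_C, eval_X]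
      norm_num [ascPochhammer_one, descPochhammer_one]
      field_simp
      ring
  | (n + 2), x => by
      have ih1 := meixner_eval_eq b c hc (n + 1) x
      have ih0 := meixner_eval_eq b c hc n x
      show (C ((1 - c) / c) *
        ((C (c - 1) * X + C (((n : ℝ) + 1) + ((n : ℝ) + 1 + b) * c)) *
            meixnerGen b c (n + 1)
          - C ((1 - c) * ((n : ℝ) + 1) * ((n : ℝ) + b)) * meixnerGen b c n)).eval x = _
      simp only [eval_mul, eval_sub, eval_add, eval_C, eval_X]
      rw [ih1, ih0, Ssum_rec]
      field_simp
      ring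

/-- The Meixner polynomials satisfy the convolution identity
`M_{n;b,c}(y+z) = ∑_{s=0}^n C(n,s) M_{s;u,c}(y) M_{n−s;v,c}(z)` whenever
`u + v = b`, where `C(n,s) = n!/(s!(n−s)!)`. -/
theorem meixnerGen_convolution (b c u v : ℝ) (hb : 0 < b)
    (hc0 : 0 < c) (hc1 : c < 1) (hu : 0 < u) (hv : 0 < v) (huv : u + v = b)
    (n : ℕ) (y z : ℝ) :
    (meixnerGen b c n).eval (y + z) =
      ∑ s ∈ Finset.range (n + 1),
        (n.choose s : ℝ) * (meixnerGen u c s).eval y *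
          (meixnerGen v c (n - s)).eval z := by
  have hc : c ≠ 0 := ne_of_gt hc0
  rw [meixner_eval_eq b c hc n (y + z), ← huv, Ssum_conv]
  apply Finset.sum_congr rfl
  intro s _
  rw [meixner_eval_eq u c hc s y, meixner_eval_eq v c hc (n - s) z, mul_assoc]
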